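/- Let Y be a finite label set, f : ℝ^d → Y measurable, σ > 0, and p₀ ∈ (0,1). If x ∈ ℝ^d and y ∈ Y satisfy 0 < p_{f,σ}(x, y) < p₀, then for every δ ∈ ℝ^d with ‖δ‖ < σ·(Φ⁻¹(p₀) − Φ⁻¹(p_{f,σ}(x, y))), one has p_{f,σ}(x + δ, y) < p₀. -/

import Mathlib

open MeasureTheory ProbabilityTheory

/-- The standard Gaussian CDF `Φ`. -/
noncomputable def stdGaussianCDF (a : ℝ) : ℝ :=
  ((gaussianReal 0 1) (Set.Iic a)).toReal

/-- The inverse `Φ⁻¹` of the standard Gaussian CDF (on `(0,1)`). -/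
noncomputable def stdGaussianCDFInv (p : ℝ) : ℝ :=
  sSup {a : ℝ | stdGaussianCDF a ≤ p}

/-- The Gaussian measure `N(0, σ²I)` on `ℝ^d` (with the Euclidean norm), obtained as the
`d`-fold product of the real Gaussian measure with mean `0` and variance `σ²`. -/
noncomputable def gaussianE (d : ℕ) (σ : ℝ) : Measure (EuclideanSpace ℝ (Fin d)) :=
  (Measure.pi fun _ : Fin d => gaussianReal 0 ⟨σ ^ 2, sq_nonneg σ⟩).map
    (MeasurableEquiv.toLp 2 (Fin d → ℝ))

/-- The smoothed confidence `p_{f,σ}(x, y) = N(0, σ²I)({δ : f(x + δ) = y})`. -/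
noncomputable def smoothedConf {d : ℕ} {Y : Type*} (f : EuclideanSpace ℝ (Fin d) → Y)
    (σ : ℝ) (x : EuclideanSpace ℝ (Fin d)) (y : Y) : ℝ :=
  (gaussianE d σ {δ | f (x + δ) = y}).toReal

/-!
Rescaling by `σ` turns `N(0, σ²I)` into the standard Gaussian `γ`, and translating `γ` by `v`
yields the measure with density `exp (⟪v, w⟫ - ‖v‖² / 2)` with respect to `γ` (Cameron–Martin).
This density is a decreasing function of `⟪u, w⟫` for the unit vector `u = -v / ‖v‖`, so by the
Neyman–Pearson argument, among all sets of `γ`-measure at most `Φ q` the half-space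
`{w | ⟪u, w⟫ ≤ q}` has the largest translated measure, namely `Φ (q + ‖v‖)`. Taking
`q = Φ⁻¹ p_{f,σ}(x, y)` and `v = δ / σ` gives `p_{f,σ}(x + δ, y) ≤ Φ (q + ‖δ‖ / σ) < p₀`.
-/

open Set Function
open scoped ENNReal NNReal RealInnerProductSpace

namespace MeasureTheory

lemma map_withDensity_comp {α β : Type*} [MeasurableSpace α] [MeasurableSpace β] (μ : Measure α)
    {e : α → β} (he : Measurable e) {g : β → ℝ≥0∞} (hg : Measurable g) :
    (μ.withDensity (g ∘ e)).map e = (μ.map e).withDensity g := by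
  ext s hs
  rw [Measure.map_apply he hs, withDensity_apply _ hs, withDensity_apply _ (he hs),
    setLIntegral_map hs hg he, comp_def]

lemma Measure.pi_withDensity {ι : Type*} [Fintype ι] {X : ι → Type*} [∀ i, MeasurableSpace (X i)]
    (μ : ∀ i, Measure (X i)) [∀ i, IsProbabilityMeasure (μ i)] {f : ∀ i, X i → ℝ≥0∞}
    (hf : ∀ i, Measurable (f i)) [∀ i, SigmaFinite ((μ i).withDensity (f i))] :
    Measure.pi (fun i ↦ (μ i).withDensity (f i)) =
      (Measure.pi μ).withDensity (fun x ↦ ∏ i, f i (x i)) := by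
  refine Measure.pi_eq fun s hs ↦ ?_
  have hfs : ∀ i, Measurable ((s i).indicator (f i)) := fun i ↦ (hf i).indicator (hs i)
  calc (Measure.pi μ).withDensity (fun x ↦ ∏ i, f i (x i)) (univ.pi s)
      = ∫⁻ x, ∏ i, (s i).indicator (f i) (x i) ∂Measure.pi μ := by
        rw [withDensity_apply _ (.univ_pi hs), ← lintegral_indicator (.univ_pi hs)]
        congr with x
        classical
        simp only [indicator_apply, Finset.prod_ite_zero, Finset.mem_univ, true_implies,
          mem_univ_pi]
    _ = ∏ i, ∫⁻ x, (s i).indicator (f i) (x i) ∂Measure.pi μ :=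
        ProbabilityTheory.lintegral_prod_eq_prod_lintegral_of_indepFun _ _
          (ProbabilityTheory.iIndepFun_pi fun i ↦ (hfs i).aemeasurable)
          fun i ↦ (hfs i).comp (measurable_pi_apply i)
    _ = ∏ i, (μ i).withDensity (f i) (s i) := by
        refine Finset.prod_congr rfl fun i _ ↦ ?_
        rw [(measurePreserving_eval μ i).lintegral_comp (hfs i), lintegral_indicator (hs i),
          withDensity_apply _ (hs i)]

lemma withDensity_le_of_threshold {α : Type*} [MeasurableSpace α] {μ : Measure α}
    [IsFiniteMeasure μ] {r : α → ℝ≥0∞} (hr : Measurable r) {A H : Set α} (hA : MeasurableSet A)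
    (hH : MeasurableSet H) {c : ℝ≥0∞} (hc_in : ∀ z ∈ H, c ≤ r z) (hc_out : ∀ z ∉ H, r z ≤ c)
    (hAH : μ A ≤ μ H) :
    μ.withDensity r A ≤ μ.withDensity r H := by
  have hdiff : μ (A \ H) ≤ μ (H \ A) := by
    rw [← measure_inter_add_sdiff A hH, ← measure_inter_add_sdiff H hA, inter_comm H A] at hAH
    exact (ENNReal.add_le_add_iff_left (measure_ne_top μ _)).1 hAH
  calc μ.withDensity r A = μ.withDensity r (A ∩ H) + μ.withDensity r (A \ H) :=
        (measure_inter_add_sdiff A hH).symm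
    _ ≤ μ.withDensity r (A ∩ H) + c * μ (H \ A) := by
        gcongr
        calc μ.withDensity r (A \ H) = ∫⁻ z in A \ H, r z ∂μ := withDensity_apply _ (hA.diff hH)
          _ ≤ ∫⁻ _ in A \ H, c ∂μ := setLIntegral_mono measurable_const fun z hz ↦ hc_out z hz.2
          _ = c * μ (A \ H) := setLIntegral_const _ _
          _ ≤ c * μ (H \ A) := by gcongr
    _ ≤ μ.withDensity r (A ∩ H) + μ.withDensity r (H \ A) := by
        gcongr
        calc c * μ (H \ A) = ∫⁻ _ in H \ A, c ∂μ := (setLIntegral_const _ _).symm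
          _ ≤ ∫⁻ z in H \ A, r z ∂μ := setLIntegral_mono hr fun z hz ↦ hc_in z hz.1
          _ = μ.withDensity r (H \ A) := (withDensity_apply _ (hH.diff hA)).symm
    _ = μ.withDensity r H := by rw [inter_comm, measure_inter_add_sdiff H hA]

end MeasureTheory

namespace ProbabilityTheory

lemma continuous_cdf (μ : Measure ℝ) [IsProbabilityMeasure μ] [NullSingletonClass μ] :
    Continuous (cdf μ) := by
  refine continuous_iff_continuousAt.2 fun a ↦
    continuousAt_iff_continuous_left_right.2 ⟨?_, (cdf μ).right_continuous a⟩
  have hjump : (cdf μ).measure {a} = 0 := by rw [measure_cdf]; exact measure_singleton a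
  rw [StieltjesFunction.measure_singleton, ENNReal.ofReal_eq_zero, sub_nonpos] at hjump
  have hleft : leftLim (cdf μ) a = cdf μ a :=
    le_antisymm ((monotone_cdf μ).leftLim_le le_rfl) hjump
  exact continuousWithinAt_Iio_iff_Iic.1
    ((monotone_cdf μ).continuousWithinAt_Iio_iff_leftLim_eq.2 hleft)

lemma strictMono_cdf {μ : Measure ℝ} [IsProbabilityMeasure μ] (h : volume ≪ μ) :
    StrictMono (cdf μ) := by
  intro a b hab
  have hpos : 0 < μ (Ioc a b) := pos_iff_ne_zero.2 fun h0 ↦ by simpa [hab.not_ge] using h h0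
  rwa [← measure_cdf μ, StieltjesFunction.measure_Ioc, ENNReal.ofReal_pos, sub_pos] at hpos

lemma gaussianReal_add_eq_withDensity (m t : ℝ) {v : ℝ≥0} (hv : v ≠ 0) :
    gaussianReal (m + t) v = (gaussianReal m v).withDensity
      (fun x ↦ ENNReal.ofReal (Real.exp ((t * (x - m) - t ^ 2 / 2) / v))) := by
  rw [gaussianReal_of_var_ne_zero _ hv, gaussianReal_of_var_ne_zero _ hv,
    ← withDensity_mul _ (measurable_gaussianPDF _ _) (by fun_prop)]
  congr with x
  rw [Pi.mul_apply, gaussianPDF, gaussianPDF, ← ENNReal.ofReal_mul (gaussianPDFReal_nonneg _ _ _),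
    gaussianPDFReal, gaussianPDFReal, mul_assoc _ (Real.exp _), ← Real.exp_add]
  congr 3
  field_simp
  ring

lemma stdGaussian_map_inner {E : Type*} [NormedAddCommGroup E] [InnerProductSpace ℝ E]
    [FiniteDimensional ℝ E] [MeasurableSpace E] [BorelSpace E] (u : E) :
    (stdGaussian E).map (fun w ↦ ⟪u, w⟫) = gaussianReal 0 (‖u‖₊ ^ 2) := by
  have h := IsGaussian.map_eq_gaussianReal (μ := stdGaussian E) (innerSL ℝ u)
  rw [integral_strongDual_stdGaussian, variance_dual_stdGaussian, innerSL_apply_norm] at h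
  rw [← coe_nnnorm, ← NNReal.coe_pow, Real.toNNReal_coe] at h
  exact h

section Euclidean

variable {ι : Type*} [Fintype ι]

lemma stdGaussian_map_add_const (v : EuclideanSpace ℝ ι) :
    (stdGaussian (EuclideanSpace ℝ ι)).map (· + v) = (stdGaussian _).withDensity
      (fun w ↦ ENNReal.ofReal (Real.exp (⟪v, w⟫ - ‖v‖ ^ 2 / 2))) := by
  have hshift : (Measure.pi fun _ : ι ↦ gaussianReal 0 1).map (fun x i ↦ x i + v i) =
      (Measure.pi fun _ : ι ↦ gaussianReal 0 1).withDensity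
        (fun x ↦ ∏ i, ENNReal.ofReal (Real.exp (v i * x i - v i ^ 2 / 2))) := by
    rw [Measure.pi_map_pi fun i ↦ (measurable_add_const (v i)).aemeasurable,
      ← Measure.pi_withDensity _
        (f := fun i x ↦ ENNReal.ofReal (Real.exp (v i * x - v i ^ 2 / 2))) fun i ↦ by fun_prop]
    congr with i : 1
    simpa [gaussianReal_map_add_const] using gaussianReal_add_eq_withDensity 0 (v i) one_ne_zero
  rw [← map_pi_eq_stdGaussian, Measure.map_map (measurable_add_const v) (by fun_prop)]
  have hcomm : (· + v) ∘ WithLp.toLp 2 = WithLp.toLp 2 ∘ (fun x i ↦ x i + v i) := rfl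
  rw [hcomm, ← Measure.map_map (by fun_prop) (by fun_prop), hshift,
    ← map_withDensity_comp _ (by fun_prop) (by fun_prop)]
  congr with x
  rw [comp_apply, ← ENNReal.ofReal_prod_of_nonneg fun i _ ↦ (Real.exp_pos _).le, ← Real.exp_sum,
    Finset.sum_sub_distrib, ← Finset.sum_div, EuclideanSpace.real_norm_sq_eq]
  simp [PiLp.inner_apply, mul_comm]

theorem stdGaussian_preimage_add_le {A : Set (EuclideanSpace ℝ ι)} (hA : MeasurableSet A)
    (v : EuclideanSpace ℝ ι) {q : ℝ} (hAq : stdGaussian _ A ≤ gaussianReal 0 1 (Iic q)) :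
    stdGaussian _ ((· + v) ⁻¹' A) ≤ gaussianReal 0 1 (Iic (q + ‖v‖)) := by
  rcases eq_or_ne v 0 with rfl | hv
  · simpa using hAq
  set γ := stdGaussian (EuclideanSpace ℝ ι)
  set u := -‖v‖⁻¹ • v
  have hu : ‖u‖₊ = 1 := by
    ext
    simp [u, norm_smul, hv]
  have huv : ⟪u, v⟫ = -‖v‖ := by
    simp only [u, neg_smul, inner_neg_left, real_inner_smul_left, real_inner_self_eq_norm_sq]
    field_simp
  have hvu (w) : ⟪v, w⟫ = -(‖v‖ * ⟪u, w⟫) := by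
    simp only [u, neg_smul, inner_neg_left, real_inner_smul_left, mul_neg, neg_neg]
    field_simp
  have hlaw : γ.map (⟪u, ·⟫) = gaussianReal 0 1 := by rw [stdGaussian_map_inner, hu, one_pow]
  have hhalf (s : ℝ) : γ {w | ⟪u, w⟫ ≤ s} = gaussianReal 0 1 (Iic s) := by
    rw [← hlaw, Measure.map_apply (by fun_prop) measurableSet_Iic]
    rfl
  set H := {w : EuclideanSpace ℝ ι | ⟪u, w⟫ ≤ q}
  have hH : MeasurableSet H := measurableSet_le (by fun_prop) measurable_const
  have hshiftH : (· + v) ⁻¹' H = {w | ⟪u, w⟫ ≤ q + ‖v‖} := by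
    ext w
    simp only [H, mem_preimage, mem_ofPred_eq, inner_add_right, huv]
    constructor <;> intro h <;> linarith
  set r := fun w ↦ ENNReal.ofReal (Real.exp (⟪v, w⟫ - ‖v‖ ^ 2 / 2))
  have hNP : γ.withDensity r A ≤ γ.withDensity r H := by
    refine withDensity_le_of_threshold (by fun_prop) hA hH
      (c := ENNReal.ofReal (Real.exp (-(‖v‖ * q) - ‖v‖ ^ 2 / 2))) (fun w hw ↦ ?_) (fun w hw ↦ ?_)
      (hAq.trans_eq (hhalf q).symm)
    · simp only [r, hvu]
      gcongr
      exact hw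
    · simp only [r, hvu]
      gcongr
      exact (not_le.1 hw).le
  calc γ ((· + v) ⁻¹' A) = γ.withDensity r A := by
        rw [← stdGaussian_map_add_const, Measure.map_apply (measurable_add_const v) hA]
    _ ≤ γ.withDensity r H := hNP
    _ = gaussianReal 0 1 (Iic (q + ‖v‖)) := by
        rw [← stdGaussian_map_add_const, Measure.map_apply (measurable_add_const v) hH, hshiftH,
          hhalf]

end Euclidean

end ProbabilityTheory

lemma stdGaussianCDF_eq_cdf : stdGaussianCDF = cdf (gaussianReal 0 1) := by
  ext a
  rw [cdf_eq_real]
  rfl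

lemma stdGaussianCDF_strictMono : StrictMono stdGaussianCDF :=
  stdGaussianCDF_eq_cdf ▸ strictMono_cdf (gaussianReal_absolutelyContinuous' 0 one_ne_zero)

lemma stdGaussianCDF_stdGaussianCDFInv {p : ℝ} (hp : p ∈ Ioo (0 : ℝ) 1) :
    stdGaussianCDF (stdGaussianCDFInv p) = p := by
  have := nullSingletonClass_gaussianReal (μ := 0) one_ne_zero
  obtain ⟨c, rfl⟩ : p ∈ range stdGaussianCDF := by
    rw [stdGaussianCDF_eq_cdf]
    exact mem_range_of_exists_le_of_exists_ge (continuous_cdf _)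
      ((tendsto_cdf_atBot _).eventually (eventually_le_nhds hp.1)).exists
      ((tendsto_cdf_atTop _).eventually (eventually_ge_nhds hp.2)).exists
  have hsub : {a | stdGaussianCDF a ≤ stdGaussianCDF c} = Iic c :=
    ext fun _ ↦ stdGaussianCDF_strictMono.le_iff_le
  rw [stdGaussianCDFInv, hsub, csSup_Iic]

lemma gaussianE_eq_map_smul (d : ℕ) (σ : ℝ) :
    gaussianE d σ = (stdGaussian (EuclideanSpace ℝ (Fin d))).map (σ • ·) := by
  have hscale : (Measure.pi fun _ : Fin d ↦ gaussianReal 0 ⟨σ ^ 2, sq_nonneg σ⟩) =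
      (Measure.pi fun _ : Fin d ↦ gaussianReal 0 1).map (fun x i ↦ σ * x i) := by
    rw [Measure.pi_map_pi fun _ ↦ (measurable_const_mul σ).aemeasurable]
    simp only [gaussianReal_map_const_mul, mul_zero, mul_one]
    rfl
  rw [gaussianE, hscale, ← map_pi_eq_stdGaussian, Measure.map_map (by fun_prop) (by fun_prop),
    Measure.map_map (by fun_prop) (by fun_prop)]
  rfl

section SmoothedConf

variable {d : ℕ} {Y : Type*} [MeasurableSpace Y] [MeasurableSingletonClass Y]
  {f : EuclideanSpace ℝ (Fin d) → Y}

lemma smoothedConf_eq_stdGaussian (hf : Measurable f) (σ : ℝ) (x : EuclideanSpace ℝ (Fin d))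
    (y : Y) : smoothedConf f σ x y = (stdGaussian _ {w | f (x + σ • w) = y}).toReal := by
  have hmeas : MeasurableSet {δ | f (x + δ) = y} :=
    hf.comp (measurable_const_add x) (measurableSet_singleton y)
  rw [smoothedConf, gaussianE_eq_map_smul, Measure.map_apply (by fun_prop) hmeas]
  rfl

lemma smoothedConf_add_eq_stdGaussian (hf : Measurable f) {σ : ℝ} (hσ : σ ≠ 0)
    (x δ : EuclideanSpace ℝ (Fin d)) (y : Y) :
    smoothedConf f σ (x + δ) y =
      (stdGaussian _ ((· + σ⁻¹ • δ) ⁻¹' {w | f (x + σ • w) = y})).toReal := by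
  rw [smoothedConf_eq_stdGaussian hf]
  congr with w
  simp only [mem_ofPred_eq, smul_add, smul_inv_smul₀ hσ, add_assoc, add_comm δ]

end SmoothedConf

theorem stmt_2_general {d : ℕ} {Y : Type*} [MeasurableSpace Y] [MeasurableSingletonClass Y]
    (f : EuclideanSpace ℝ (Fin d) → Y) (hf : Measurable f)
    (σ : ℝ) (hσ : 0 < σ) (p₀ : ℝ) (hp₀ : p₀ ∈ Set.Ioo (0 : ℝ) 1)
    (x : EuclideanSpace ℝ (Fin d)) (y : Y)
    (h₁ : 0 < smoothedConf f σ x y) (h₂ : smoothedConf f σ x y < p₀)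
    (δ : EuclideanSpace ℝ (Fin d))
    (hδ : ‖δ‖ < σ * (stdGaussianCDFInv p₀ - stdGaussianCDFInv (smoothedConf f σ x y))) :
    smoothedConf f σ (x + δ) y < p₀ := by
  set q := stdGaussianCDFInv (smoothedConf f σ x y)
  set A := {w | f (x + σ • w) = y}
  have hA : MeasurableSet A := hf.comp (by fun_prop) (measurableSet_singleton y)
  have hAq : stdGaussian _ A ≤ gaussianReal 0 1 (Iic q) := by
    rw [← ENNReal.toReal_le_toReal (measure_ne_top _ _) (measure_ne_top _ _),
      ← smoothedConf_eq_stdGaussian hf]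
    exact (stdGaussianCDF_stdGaussianCDFInv ⟨h₁, h₂.trans hp₀.2⟩).ge
  have hradius : q + ‖σ⁻¹ • δ‖ < stdGaussianCDFInv p₀ := by
    rw [norm_smul, norm_inv, Real.norm_of_nonneg hσ.le]
    linarith [(inv_mul_lt_iff₀ hσ).2 hδ]
  calc smoothedConf f σ (x + δ) y = (stdGaussian _ ((· + σ⁻¹ • δ) ⁻¹' A)).toReal :=
        smoothedConf_add_eq_stdGaussian hf hσ.ne' x δ y
    _ ≤ stdGaussianCDF (q + ‖σ⁻¹ • δ‖) :=
        ENNReal.toReal_mono (measure_ne_top _ _) (stdGaussian_preimage_add_le hA _ hAq)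
    _ < stdGaussianCDF (stdGaussianCDFInv p₀) := stdGaussianCDF_strictMono hradius
    _ = p₀ := stdGaussianCDF_stdGaussianCDFInv hp₀

/-- certified radius for staying below the threshold `p₀`. -/
theorem stmt_2 {d : ℕ} {Y : Type*} [Fintype Y] [MeasurableSpace Y] [MeasurableSingletonClass Y]
    (f : EuclideanSpace ℝ (Fin d) → Y) (hf : Measurable f)
    (σ : ℝ) (hσ : 0 < σ) (p₀ : ℝ) (hp₀ : p₀ ∈ Set.Ioo (0 : ℝ) 1)
    (x : EuclideanSpace ℝ (Fin d)) (y : Y)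
    (h₁ : 0 < smoothedConf f σ x y) (h₂ : smoothedConf f σ x y < p₀)
    (δ : EuclideanSpace ℝ (Fin d))
    (hδ : ‖δ‖ < σ * (stdGaussianCDFInv p₀ - stdGaussianCDFInv (smoothedConf f σ x y))) :
    smoothedConf f σ (x + δ) y < p₀ :=
  stmt_2_general f hf σ hσ p₀ hp₀ x y h₁ h₂ δ hδ
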